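/- For every \alpha \in (0,1], -\alpha\log\alpha - (1-\alpha)\log(1-\alpha) < \frac{(0.81)^2}{2\alpha^2} (where the entropy term is understood as 0 at \alpha = 1). -/

import Mathlib

/-!
Write `α = (1 + u) / 2`. Then `d/du binEntropy ((1 + u) / 2) = -artanh u`, and since every
coefficient of the series `artanh u = ∑ u ^ (2k+1) / (2k+1)` is positive, each Taylor
polynomial of the entropy at `u = 0` is an upper bound for `u ∈ [0, 1]`. Already the one of
degree 4, `log 2 - u² / 2 - u⁴ / 12`, stays below `0.81² / (2α²)` for `α ≥ 1/2`; for `α < 1/2`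
the bound `binEntropy α ≤ log 2 < 0.81² / (2 · (1/2)²)` suffices.
-/

open Real Set Finset

lemma sum_le_log_one_add_sub_log_one_sub {u : ℝ} (hu₀ : 0 ≤ u) (hu₁ : u < 1) (n : ℕ) :
    ∑ k ∈ range n, 2 * (1 / (2 * k + 1)) * u ^ (2 * k + 1) ≤ log (1 + u) - log (1 - u) :=
  sum_le_hasSum _ (fun _ _ => by positivity)
    (hasSum_log_sub_log_of_abs_lt_one (by rwa [abs_of_nonneg hu₀]))

/-- `log 2 - binEntropyTaylor n u / 2` is the Taylor polynomial of degree `2n` of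
`binEntropy ((1 + u) / 2)` at `u = 0`. -/
noncomputable def binEntropyTaylor (n : ℕ) (u : ℝ) : ℝ :=
  ∑ k ∈ range n, u ^ (2 * k + 2) / ((k + 1) * (2 * k + 1))

lemma hasDerivAt_binEntropyTaylor (n : ℕ) (u : ℝ) :
    HasDerivAt (binEntropyTaylor n)
      (∑ k ∈ range n, 2 * (1 / (2 * k + 1)) * u ^ (2 * k + 1)) u := by
  refine (HasDerivAt.fun_sum fun k _ =>
    (hasDerivAt_pow (2 * k + 2) u).div_const ((k + 1) * (2 * k + 1) : ℝ)).congr_deriv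
    (sum_congr rfl fun k _ => ?_)
  push_cast
  field_simp

lemma hasDerivAt_binEntropy_one_add_div_two {u : ℝ} (hu₀ : 0 < u) (hu₁ : u < 1) :
    HasDerivAt (fun u => binEntropy ((1 + u) / 2)) (-(log (1 + u) - log (1 - u)) / 2) u := by
  have hp : HasDerivAt (fun u : ℝ => (1 + u) / 2) (1 / 2) u :=
    ((hasDerivAt_id u).const_add 1).div_const 2
  refine ((hasDerivAt_binEntropy (p := (1 + u) / 2) (by linarith) (by linarith)).comp u
    hp).congr_deriv ?_
  rw [show 1 - (1 + u) / 2 = (1 - u) / 2 by ring, log_div (by linarith) two_ne_zero,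
    log_div (by linarith) two_ne_zero]
  ring

theorem binEntropy_one_add_div_two_le (n : ℕ) {u : ℝ} (hu : u ∈ Icc (0 : ℝ) 1) :
    binEntropy ((1 + u) / 2) ≤ log 2 - binEntropyTaylor n u / 2 := by
  let G u := binEntropy ((1 + u) / 2) + binEntropyTaylor n u / 2
  have hG : AntitoneOn G (Icc 0 1) := by
    refine antitoneOn_of_hasDerivWithinAt_nonpos (convex_Icc 0 1)
      (by unfold G binEntropyTaylor; fun_prop)
      (f' := fun u => -(log (1 + u) - log (1 - u)) / 2
        + (∑ k ∈ range n, 2 * (1 / (2 * k + 1)) * u ^ (2 * k + 1)) / 2)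
      (fun u hu => ?_) (fun u hu => ?_)
    all_goals rw [interior_Icc] at hu
    · exact ((hasDerivAt_binEntropy_one_add_div_two hu.1 hu.2).add
        ((hasDerivAt_binEntropyTaylor n u).div_const 2)).hasDerivWithinAt
    · linarith [sum_le_log_one_add_sub_log_one_sub hu.1.le hu.2 n]
  have hG₀ : G 0 = log 2 := by simp [G, binEntropyTaylor]
  have hGu : G u ≤ G 0 := hG (left_mem_Icc.2 zero_le_one) hu hu.1
  simp only [G] at hGu hG₀
  linarith

lemma binEntropy_lt_of_half_le {α : ℝ} (h₀ : 1 / 2 ≤ α) (h₁ : α ≤ 1) :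
    binEntropy α < 0.81 ^ 2 / (2 * α ^ 2) := by
  obtain ⟨u, rfl⟩ : ∃ u, α = (1 + u) / 2 := ⟨2 * α - 1, by ring⟩
  have hu₀ : 0 ≤ u := by linarith
  have hbound := binEntropy_one_add_div_two_le 2 ⟨hu₀, by linarith⟩
  simp only [binEntropyTaylor, sum_range_succ, sum_range_zero] at hbound
  norm_num at hbound
  have hpoly : (0.6931471808 - (u ^ 2 + u ^ 4 / 6) / 2) * (1 + u) ^ 2 < 1.3122 := by
    nlinarith [sq_nonneg (u - 0.6), mul_nonneg hu₀ (sq_nonneg (u - 0.6))]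
  rw [lt_div_iff₀ (by positivity)]
  nlinarith [log_two_lt_d9, sq_nonneg (1 + u)]

/-- For every `α ∈ (0,1]` the binary entropy satisfies
`I(α) < (0.81)²/(2α²)` (with `log 0 = 0`, so the entropy term is `0` at `α = 1`). -/
theorem entropy_lt_annealed_rate :
    ∀ α ∈ Set.Ioc (0 : ℝ) 1,
      -α * Real.log α - (1 - α) * Real.log (1 - α) < (0.81) ^ 2 / (2 * α ^ 2) := by
  rintro α ⟨hα₀, hα₁⟩
  have hent : -α * log α - (1 - α) * log (1 - α) = binEntropy α := by
    rw [binEntropy_eq_negMulLog_add_negMulLog_one_sub, negMulLog, negMulLog]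
    ring
  rw [hent]
  rcases le_or_gt (1 / 2) α with hhalf | hhalf
  · exact binEntropy_lt_of_half_le hhalf hα₁
  · have hrate : 1.3122 < 0.81 ^ 2 / (2 * α ^ 2) := by
      rw [lt_div_iff₀ (by positivity)]
      nlinarith
    linarith [binEntropy_le_log_two (p := α), log_two_lt_d9]
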